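/- arXiv:1606.06139 — 6 statements merged into one kernel-verified Lean document; each statement's English description precedes it below -/
import Mathlib

section
/- Let G be a finitely generated group of subexponential growth, and let N be a normal subgroup of G such that the quotient group G/N is solvable. Then N is finitely generated. -/
/-!
Subexponential growth forces, for every `t` and every finite `U`, the subgroup generated by the
conjugates `t ^ j * u * t ^ (-j)` (`u ∈ U`, `j ∈ ℤ`) to be finitely generated: otherwise a strictly
increasing chain of such subgroups produces `2 ^ n` distinct elements in a ball of radius `O(n)`.
Hence if `t` normalizes `H` and `H ⊔ ⟨t⟩` is finitely generated, then so is `H`. Removing one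
generator at a time handles normal subgroups with abelian quotient, and induction along the
derived series of `G ⧸ N` gives the solvable case.
-/

open Pointwise Subgroup

section Growth

variable {G : Type*} [Group G] {S : Set G}

def HasSubexpGrowth (S : Set G) : Prop :=
  ∀ c : ℝ, 1 < c → ∃ R : ℕ, ∀ r : ℕ, R ≤ r → ((((S ∪ {1} : Set G)) ^ r).ncard : ℝ) ≤ c ^ r

lemma Set.Finite.union_one_pow (hfin : S.Finite) (r : ℕ) : ((S ∪ {1}) ^ r).Finite := by
  induction r with
  | zero => simp
  | succ r ih => rw [pow_succ]; exact ih.mul (hfin.union (Set.finite_singleton 1))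

lemma exists_mem_union_one_pow (hsym : S⁻¹ = S) (hgen : closure S = ⊤) (g : G) :
    ∃ r : ℕ, g ∈ (S ∪ {1}) ^ r := by
  have hg : g ∈ closure S := hgen ▸ mem_top g
  induction hg using closure_induction with
  | mem s hs => exact ⟨1, by simp [hs]⟩
  | one => exact ⟨0, by simp⟩
  | mul a b _ _ ha hb =>
    obtain ⟨r, hr⟩ := ha
    obtain ⟨r', hr'⟩ := hb
    exact ⟨r + r', pow_add (S ∪ {1}) r r' ▸ Set.mul_mem_mul hr hr'⟩
  | inv a _ ha =>
    obtain ⟨r, hr⟩ := ha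
    have hinv : (S ∪ {1})⁻¹ = S ∪ {1} := by rw [Set.union_inv, hsym, Set.inv_singleton, inv_one]
    exact ⟨r, by rw [← hinv, inv_pow]; exact Set.inv_mem_inv.2 hr⟩

lemma exists_subset_union_one_pow (hsym : S⁻¹ = S) (hgen : closure S = ⊤) {A : Set G}
    (hA : A.Finite) : ∃ L : ℕ, A ⊆ (S ∪ {1}) ^ L := by
  choose r hr using exists_mem_union_one_pow hsym hgen
  obtain ⟨L, hL⟩ := (hA.image r).bddAbove
  exact ⟨L, fun a ha => Set.pow_subset_pow_right (by simp) (hL ⟨a, ha, rfl⟩) (hr a)⟩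

lemma HasSubexpGrowth.exists_ncard_lt_two_pow (hS : HasSubexpGrowth S) {K : ℕ} (hK : 0 < K) :
    ∃ n : ℕ, ((S ∪ {1}) ^ (K * n)).ncard < 2 ^ n := by
  set c : ℝ := (3 / 2) ^ ((K : ℝ)⁻¹)
  have hcK : c ^ K = 3 / 2 := Real.rpow_inv_natCast_pow (by norm_num) hK.ne'
  obtain ⟨R, hR⟩ := hS c (Real.one_lt_rpow (by norm_num) (by positivity))
  refine ⟨R + 1, ?_⟩
  have : (((S ∪ {1}) ^ (K * (R + 1))).ncard : ℝ) < 2 ^ (R + 1) :=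
    calc _ ≤ c ^ (K * (R + 1)) := hR _ (by nlinarith)
      _ = (3 / 2) ^ (R + 1) := by rw [pow_mul, hcK]
      _ < 2 ^ (R + 1) := pow_lt_pow_left₀ (by norm_num) (by norm_num) (by omega)
  exact_mod_cast this

/-- The `2 ^ n` products `c₀ ^ ε₀ ⋯ c_{n-1} ^ ε_{n-1}` of the conjugates
`cᵢ = t ^ (i+1) * v i * t ^ -(i+1)` are pairwise distinct, and after right multiplication by
`t ^ n` they telescope to `(t * v 0 ^ ε₀) ⋯ (t * v (n-1) ^ ε_{n-1})`, of length at most `K n`. -/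
lemma two_pow_le_ncard_union_one_pow (hfin : S.Finite) {K : ℕ} {t : G} {v : ℕ → G}
    (ht : t ∈ (S ∪ {1}) ^ K) (htv : ∀ n, t * v n ∈ (S ∪ {1}) ^ K)
    {A : ℕ → Subgroup G} (hA : Monotone A)
    (hmem : ∀ n, MulAut.conj (t ^ (n + 1)) (v n) ∈ A (n + 1))
    (hnot : ∀ n, MulAut.conj (t ^ (n + 1)) (v n) ∉ A n) (n : ℕ) :
    2 ^ n ≤ ((S ∪ {1}) ^ (K * n)).ncard := by
  set Z : ℕ → Set G := fun n => {z ∈ (S ∪ {1}) ^ (K * n) | z * (t ^ n)⁻¹ ∈ A n}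
  have hZfin : ∀ n, (Z n).Finite := fun n => (hfin.union_one_pow _).subset (Set.sep_subset _ _)
  suffices hZ : 2 ^ n ≤ (Z n).ncard from
    hZ.trans (Set.ncard_le_ncard (Set.sep_subset _ _) (hfin.union_one_pow _))
  induction n with
  | zero =>
    have hZ0 : Z 0 = {1} := by ext z; simpa [Z] using fun h => h ▸ one_mem (A 0)
    simp [hZ0]
  | succ n ih =>
    have hball : ∀ {z g}, z ∈ Z n → g ∈ (S ∪ {1}) ^ K → z * g ∈ (S ∪ {1}) ^ (K * (n + 1)) :=
      fun hz hg => by rw [mul_add_one, pow_add]; exact Set.mul_mem_mul hz.1 hg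
    have hsub₁ : (· * t) '' Z n ⊆ Z (n + 1) := by
      rintro _ ⟨z, hz, rfl⟩
      refine ⟨hball hz ht, ?_⟩
      have : z * t * (t ^ (n + 1))⁻¹ = z * (t ^ n)⁻¹ := by group
      exact this ▸ hA n.le_succ hz.2
    have hsub₂ : (· * (t * v n)) '' Z n ⊆ Z (n + 1) := by
      rintro _ ⟨z, hz, rfl⟩
      refine ⟨hball hz (htv n), ?_⟩
      have : z * (t * v n) * (t ^ (n + 1))⁻¹
          = z * (t ^ n)⁻¹ * MulAut.conj (t ^ (n + 1)) (v n) := by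
        rw [MulAut.conj_apply]; group
      exact this ▸ mul_mem (hA n.le_succ hz.2) (hmem n)
    have hdisj : Disjoint ((· * t) '' Z n) ((· * (t * v n)) '' Z n) := by
      rw [Set.disjoint_left]
      rintro _ ⟨z, hz, rfl⟩ ⟨z', hz', hzz'⟩
      apply hnot n
      have : MulAut.conj (t ^ (n + 1)) (v n) = (z' * (t ^ n)⁻¹)⁻¹ * (z * (t ^ n)⁻¹) := by
        obtain rfl : z = z' * (t * v n) * t⁻¹ := eq_mul_inv_of_mul_eq hzz'.symm
        rw [MulAut.conj_apply]; group
      exact this ▸ mul_mem (inv_mem hz'.2) hz.2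
    calc 2 ^ (n + 1) = 2 ^ n + 2 ^ n := by ring
      _ ≤ (Z n).ncard + (Z n).ncard := add_le_add ih ih
      _ = ((· * t) '' Z n ∪ (· * (t * v n)) '' Z n).ncard := by
        rw [Set.ncard_union_eq hdisj ((hZfin n).image _) ((hZfin n).image _),
          Set.ncard_image_of_injective _ (mul_left_injective _),
          Set.ncard_image_of_injective _ (mul_left_injective _)]
      _ ≤ (Z (n + 1)).ncard := Set.ncard_le_ncard (Set.union_subset hsub₁ hsub₂) (hZfin _)

lemma closure_iUnion_conj_pow_eq_of_mem {t : G} {U : Set G} {m : ℕ}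
    (hm : ∀ u ∈ U,
      MulAut.conj (t ^ (m + 1)) u ∈ closure (⋃ j ∈ Set.Iic m, MulAut.conj (t ^ j) '' U)) :
    closure (⋃ j : ℕ, MulAut.conj (t ^ j) '' U)
      = closure (⋃ j ∈ Set.Iic m, MulAut.conj (t ^ j) '' U) := by
  set A := closure (⋃ j ∈ Set.Iic m, MulAut.conj (t ^ j) '' U)
  have hconj : A ≤ A.comap (MulAut.conj t).toMonoidHom := by
    refine (closure_le _).2 (Set.iUnion₂_subset fun j hj => Set.image_subset_iff.2 fun u hu => ?_)
    have : MulAut.conj t (MulAut.conj (t ^ j) u) = MulAut.conj (t ^ (j + 1)) u := by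
      simp [pow_succ', mul_assoc]
    show MulAut.conj t (MulAut.conj (t ^ j) u) ∈ A
    rw [this]
    rcases (Set.mem_Iic.1 hj).lt_or_eq with hlt | rfl
    · exact subset_closure (Set.mem_biUnion (Set.mem_Iic.2 hlt) ⟨u, hu, rfl⟩)
    · exact hm u hu
  have hall : ∀ j : ℕ, ∀ u ∈ U, MulAut.conj (t ^ j) u ∈ A := by
    intro j u hu
    induction j with
    | zero => exact subset_closure (Set.mem_biUnion (Set.mem_Iic.2 (Nat.zero_le m)) ⟨u, hu, rfl⟩)
    | succ j ih => simpa [pow_succ', mul_assoc] using hconj ih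
  exact le_antisymm ((closure_le _).2 (Set.iUnion_subset fun j => Set.image_subset_iff.2 (hall j)))
    (closure_mono (Set.iUnion₂_subset_iUnion _ _))

lemma closure_iUnion_conj_pow_fg (hfin : S.Finite) (hsym : S⁻¹ = S) (hgen : closure S = ⊤)
    (hS : HasSubexpGrowth S) (t : G) {U : Set G} (hU : U.Finite) :
    (closure (⋃ j : ℕ, MulAut.conj (t ^ j) '' U)).FG := by
  set A : ℕ → Subgroup G := fun m => closure (⋃ j ∈ Set.Iic m, MulAut.conj (t ^ j) '' U)
  have hA : Monotone A := fun m m' h =>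
    closure_mono (Set.biUnion_subset_biUnion_left (Set.Iic_subset_Iic.2 h))
  by_cases hstab : ∃ m, ∀ u ∈ U, MulAut.conj (t ^ (m + 1)) u ∈ A m
  · obtain ⟨m, hm⟩ := hstab
    exact closure_iUnion_conj_pow_eq_of_mem hm ▸
      (fg_iff _).2 ⟨_, rfl, (Set.finite_Iic m).biUnion fun j _ => hU.image _⟩
  · push Not at hstab
    choose v hvU hv using hstab
    obtain ⟨L, hL⟩ := exists_subset_union_one_pow hsym hgen ((hU.image (t * ·)).insert t)
    have hLsucc : (S ∪ {1}) ^ L ⊆ (S ∪ {1}) ^ (L + 1) :=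
      Set.pow_subset_pow_right (by simp) L.le_succ
    obtain ⟨n, hn⟩ := hS.exists_ncard_lt_two_pow L.succ_pos
    refine absurd (two_pow_le_ncard_union_one_pow hfin (hLsucc (hL (Set.mem_insert t _)))
      (fun n => hLsucc (hL (Set.mem_insert_of_mem _ ⟨v n, hvU n, rfl⟩))) hA (fun n => ?_) hv n)
      hn.not_ge
    exact subset_closure (Set.mem_biUnion (Set.mem_Iic.2 le_rfl) ⟨v n, hvU n, rfl⟩)

end Growth

def PowConjClosureFG (G : Type*) [Group G] : Prop :=
  ∀ (t : G) (U : Set G), U.Finite → (closure (⋃ j : ℤ, MulAut.conj (t ^ j) '' U)).FG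

lemma powConjClosureFG_of_hasSubexpGrowth {G : Type*} [Group G] {S : Set G} (hfin : S.Finite)
    (hsym : S⁻¹ = S) (hgen : closure S = ⊤) (hS : HasSubexpGrowth S) : PowConjClosureFG G := by
  intro t U hU
  have : (⋃ j : ℤ, MulAut.conj (t ^ j) '' U)
      = (⋃ j : ℕ, MulAut.conj (t ^ j) '' U) ∪ ⋃ j : ℕ, MulAut.conj (t⁻¹ ^ j) '' U := by
    refine le_antisymm (Set.iUnion_subset fun j => ?_) (Set.union_subset ?_ ?_)
    · obtain ⟨j, rfl | rfl⟩ := Int.eq_nat_or_neg j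
      · exact Set.subset_union_of_subset_left (Set.subset_iUnion_of_subset j (by simp)) _
      · exact Set.subset_union_of_subset_right (Set.subset_iUnion_of_subset j (by simp)) _
    · exact Set.iUnion_subset fun j => Set.subset_iUnion_of_subset (j : ℤ) (by simp)
    · exact Set.iUnion_subset fun j => Set.subset_iUnion_of_subset (-(j : ℤ)) (by simp)
  rw [this, Subgroup.closure_union]
  exact (closure_iUnion_conj_pow_fg hfin hsym hgen hS t hU).sup
    (closure_iUnion_conj_pow_fg hfin hsym hgen hS t⁻¹ hU)

section PowConjClosureFG

variable {G : Type*} [Group G]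

lemma mem_sup_zpowers_iff {H : Subgroup G} {t g : G} (ht : t ∈ normalizer (H : Set G)) :
    g ∈ H ⊔ zpowers t ↔ ∃ k : ℤ, t ^ k * g ∈ H := by
  rw [sup_comm, ← SetLike.mem_coe, coe_mul_of_left_le_normalizer_right _ _ (zpowers_le.2 ht),
    Set.mem_mul]
  constructor
  · rintro ⟨_, ⟨k, rfl⟩, h, hh, rfl⟩
    exact ⟨-k, by simpa [zpow_neg] using hh⟩
  · rintro ⟨k, hk⟩
    exact ⟨t ^ (-k), ⟨-k, rfl⟩, t ^ k * g, hk, by group⟩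

lemma fg_of_le_zpowers {H : Subgroup G} {t : G} (h : H ≤ zpowers t) : H.FG := by
  obtain ⟨n, rfl⟩ := (le_zpowers_iff t H).1 h
  exact ⟨{t ^ n}, by simp [zpowers_eq_closure]⟩

lemma le_normalizer_of_commutator_le {H K : Subgroup G} (hKH : ⁅K, K⁆ ≤ H) (hHK : H ≤ K) :
    K ≤ normalizer (H : Set G) :=
  le_normalizer_iff.2 fun a ha h hh => by
    simpa [commutatorElement_def] using mul_mem (hKH (commutator_mem_commutator ha (hHK hh))) hh

lemma PowConjClosureFG.fg_of_sup_zpowers_fg (hG : PowConjClosureFG G) {H : Subgroup G} {t : G}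
    (ht : t ∈ normalizer (H : Set G)) (hfg : (H ⊔ zpowers t).FG) : H.FG := by
  -- `H` is generated by the `t`-conjugates of finitely many elements together with `H ⊓ ⟨t⟩`.
  obtain ⟨T, hT⟩ := hfg
  have hk : ∀ s ∈ T, ∃ k : ℤ, t ^ k * s ∈ H := fun s hs =>
    (mem_sup_zpowers_iff ht).1 (hT ▸ subset_closure hs)
  choose! k hk using hk
  set U : Set G := (fun s => t ^ k s * s) '' T
  set H₀ : Subgroup G := closure (⋃ j : ℤ, MulAut.conj (t ^ j) '' U)
  have hH₀ : H₀ ≤ H := by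
    refine (closure_le _).2 (Set.iUnion_subset fun j => ?_)
    rintro _ ⟨_, ⟨s, hs, rfl⟩, rfl⟩
    exact (mem_normalizer_iff.1 (zpow_mem ht j) _).1 (hk s hs)
  have htH₀ : t ∈ normalizer (H₀ : Set G) := by
    refine zpowers_le.1 (le_normalizer_closure_iff.2 ?_)
    rintro _ ⟨i, rfl⟩ _ ⟨_, ⟨j, rfl⟩, u, hu, rfl⟩
    refine subset_closure (Set.mem_iUnion.2 ⟨i + j, u, hu, ?_⟩)
    simp only [MulAut.conj_apply, zpow_add]
    group
  have hTH₀ : closure (T : Set G) ≤ H₀ ⊔ zpowers t := (closure_le _).2 fun s hs =>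
    (mem_sup_zpowers_iff htH₀).2
      ⟨k s, subset_closure (Set.mem_iUnion.2 ⟨0, _, ⟨s, hs, rfl⟩, by simp⟩)⟩
  have hsplit : H = H₀ ⊔ (H ⊓ zpowers t) := by
    refine le_antisymm (fun g hg => ?_) (sup_le hH₀ inf_le_left)
    obtain ⟨j, hj⟩ := (mem_sup_zpowers_iff htH₀).1 (hTH₀ (hT ▸ mem_sup_left hg))
    have htj : (t ^ j)⁻¹ ∈ H ⊓ zpowers t := mem_inf.2
      ⟨by simpa using mul_mem hg (inv_mem (hH₀ hj)), inv_mem (zpow_mem (mem_zpowers t) j)⟩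
    simpa using mul_mem (mem_sup_right htj) (mem_sup_left hj)
  exact hsplit ▸ (hG t U (T.finite_toSet.image _)).sup (fg_of_le_zpowers inf_le_right)

lemma PowConjClosureFG.fg_of_commutator_le (hG : PowConjClosureFG G) {K M : Subgroup G}
    (hK : K.FG) (hKM : ⁅K, K⁆ ≤ M) (hMK : M ≤ K) : M.FG := by
  classical
  obtain ⟨T, hT⟩ := hK
  suffices ∀ A : Finset G, (A : Set G) ⊆ K → (M ⊔ closure (A : Set G)).FG → M.FG from
    this T (hT ▸ subset_closure) (by rw [hT, sup_of_le_right hMK]; exact ⟨T, hT⟩)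
  intro A
  induction A using Finset.induction_on with
  | empty => simp
  | insert a A _ ih =>
    intro hAK hfg
    rw [Finset.coe_insert, Set.insert_subset_iff] at hAK
    have hHK : M ⊔ closure (A : Set G) ≤ K := sup_le hMK ((closure_le _).2 hAK.2)
    refine ih hAK.2 (hG.fg_of_sup_zpowers_fg (t := a) ?_ ?_)
    · exact le_normalizer_of_commutator_le (hKM.trans le_sup_left) hHK hAK.1
    · rwa [Finset.coe_insert, Set.insert_eq, Subgroup.closure_union, ← zpowers_eq_closure,
        sup_left_comm, sup_comm] at hfg

theorem PowConjClosureFG.fg_of_isSolvable_quotient (hG : PowConjClosureFG G) [Group.FG G]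
    (N : Subgroup G) [N.Normal] [Group.IsSolvable (G ⧸ N)] : N.FG := by
  obtain ⟨n, hn⟩ := Group.IsSolvable.solvable (G := G ⧸ N)
  have hfg : ∀ i, ((derivedSeries (G ⧸ N) i).comap (QuotientGroup.mk' N)).FG := by
    intro i
    induction i with
    | zero => simpa [← Group.fg_def]
    | succ i ih =>
      refine hG.fg_of_commutator_le ih ?_ (comap_mono (derivedSeries_antitone _ i.le_succ))
      rw [← map_le_iff_le_comap, map_commutator, derivedSeries_succ]
      exact commutator_mono (map_comap_le _ _) (map_comap_le _ _)
  simpa [hn, QuotientGroup.ker_mk'] using hfg n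

end PowConjClosureFG

/-- **Rosset's theorem.** If `G` is a finitely generated group of subexponential growth
(with respect to a finite symmetric generating set `S`, where balls are
`B r = (S ∪ {1}) ^ r`), and `N` is a normal subgroup of `G` such that the quotient `G ⧸ N`
is solvable, then `N` is finitely generated. -/
theorem rosset_fg {G : Type*} [Group G] (S : Set G) (hfin : S.Finite)
    (hsym : S⁻¹ = S) (hgen : Subgroup.closure S = ⊤)
    (hsubexp : ∀ c : ℝ, 1 < c → ∃ R : ℕ, ∀ r : ℕ, R ≤ r →
      ((((S ∪ {1} : Set G)) ^ r).ncard : ℝ) ≤ c ^ r)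
    (N : Subgroup G) [N.Normal] [Group.IsSolvable (G ⧸ N)] :
    N.FG := by
  have : Group.FG G := Group.fg_iff.2 ⟨S, hgen, hfin⟩
  exact (powConjClosureFG_of_hasSubexpGrowth hfin hsym hgen hsubexp).fg_of_isSolvable_quotient N
end

section
/- Let G be an infinite group generated by a finite symmetric set S. For r ∈ ℕ let B_r = (S ∪ {1})^r and for n ≥ 1 let ρ(n) = min { r ∈ ℕ : |B_r| ≥ n }. For a nonempty finite subset A ⊆ G define the edge boundary ∂A = { (a,s) ∈ A × S : a·s ∉ A }. Then for every nonempty finite A ⊆ G, |∂A| ≥ |A| / (2 ρ(2|A|)). -/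
open Pointwise Finset

/-!
Let `D(g) = {a ∈ A | a * g ∉ A}`. Since `a * (g * h) ∉ A` forces `a * g ∉ A` or
`a * g ∈ D(h)`, we get `|D(g * h)| ≤ |D(g)| + |D(h)|`, and `|D(s)|` is the number of boundary
edges labelled `s`; so `|D(g)| ≤ r |∂A|` on the ball `B_r`. On the other hand the map
`(g, a) ↦ (a, a * g)` shows `∑_{g ∈ B_r} |A ∩ A g⁻¹| ≤ |A|²`, so once `|B_r| ≥ 2|A|` some
`g ∈ B_r` has `|A ∩ A g⁻¹| ≤ |A| / 2`, i.e. `|A| ≤ 2 |D(g)| ≤ 2 r |∂A|`.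
-/

namespace CayleyGraph

variable {G : Type*} [Group G] [DecidableEq G]

def edgeBoundary (S A : Finset G) : Finset (G × G) :=
  (A ×ˢ S).filter fun p => p.1 * p.2 ∉ A

variable (A : Finset G)

lemma card_filter_mul_notMem_mul_le (g h : G) :
    #{a ∈ A | a * (g * h) ∉ A} ≤ #{a ∈ A | a * g ∉ A} + #{a ∈ A | a * h ∉ A} := by
  have hsub : {a ∈ A | a * (g * h) ∉ A} ⊆
      {a ∈ A | a * g ∉ A} ∪ {a ∈ A | a * g ∈ A ∧ a * g * h ∉ A} := by
    intro a ha
    simp only [mem_filter, mem_union, ← mul_assoc] at ha ⊢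
    tauto
  have htranslate : #{a ∈ A | a * g ∈ A ∧ a * g * h ∉ A} ≤ #{a ∈ A | a * h ∉ A} :=
    card_le_card_of_injOn (· * g) (fun a ha => by simp_all) (mul_left_injective g).injOn
  calc #{a ∈ A | a * (g * h) ∉ A}
      ≤ #{a ∈ A | a * g ∉ A} + #{a ∈ A | a * g ∈ A ∧ a * g * h ∉ A} :=
        (card_le_card hsub).trans (card_union_le _ _)
    _ ≤ #{a ∈ A | a * g ∉ A} + #{a ∈ A | a * h ∉ A} := by gcongr

lemma card_filter_mul_notMem_le_card_edgeBoundary {S : Finset G} {s : G}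
    (hs : s ∈ insert 1 S) :
    #{a ∈ A | a * s ∉ A} ≤ #(edgeBoundary S A) := by
  rcases mem_insert.mp hs with rfl | hs
  · simp [filter_not]
  · exact card_le_card_of_injOn (fun a => (a, s)) (fun a ha => by simp_all [edgeBoundary])
      fun a _ b _ hab => (Prod.mk.inj hab).1

lemma card_filter_mul_notMem_le_of_mem_pow {S : Finset G} {r : ℕ} {g : G}
    (hg : g ∈ insert 1 S ^ r) : #{a ∈ A | a * g ∉ A} ≤ r * #(edgeBoundary S A) := by
  induction r generalizing g with
  | zero =>
    obtain rfl : g = 1 := by simpa using hg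
    simp
  | succ r ih =>
    obtain ⟨h, hh, s, hs, rfl⟩ := mem_mul.mp (pow_succ (insert 1 S) r ▸ hg)
    calc #{a ∈ A | a * (h * s) ∉ A}
        ≤ #{a ∈ A | a * h ∉ A} + #{a ∈ A | a * s ∉ A} :=
          card_filter_mul_notMem_mul_le A h s
      _ ≤ r * #(edgeBoundary S A) + #(edgeBoundary S A) :=
        add_le_add (ih hh) (card_filter_mul_notMem_le_card_edgeBoundary A hs)
      _ = (r + 1) * #(edgeBoundary S A) := by ring

lemma sum_card_filter_mul_mem_le (B : Finset G) :
    ∑ g ∈ B, #{a ∈ A | a * g ∈ A} ≤ #A * #A := by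
  simp only [card_filter]
  rw [sum_comm, ← smul_eq_mul, ← sum_const]
  refine sum_le_sum fun a _ => ?_
  rw [← card_filter]
  exact card_le_card_of_injOn (a * ·) (fun g hg => (mem_filter.mp hg).2)
    (mul_right_injective a).injOn

lemma exists_two_mul_card_filter_mul_mem_le {B : Finset G} (hB : B.Nonempty)
    (hBA : 2 * #A ≤ #B) :
    ∃ g ∈ B, 2 * #{a ∈ A | a * g ∈ A} ≤ #A := by
  refine exists_le_of_sum_le hB ?_
  calc ∑ g ∈ B, 2 * #{a ∈ A | a * g ∈ A}
      ≤ 2 * (#A * #A) := by rw [← mul_sum]; gcongr; exact sum_card_filter_mul_mem_le A B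
    _ ≤ ∑ _g ∈ B, #A := by rw [sum_const, smul_eq_mul, ← mul_assoc]; gcongr

theorem card_le_two_mul_mul_card_edgeBoundary {S : Finset G} {r : ℕ}
    (hr : 2 * #A ≤ #(insert 1 S ^ r)) : #A ≤ 2 * r * #(edgeBoundary S A) := by
  have hball : (insert 1 S ^ r).Nonempty := (insert_nonempty 1 S).pow
  obtain ⟨g, hg, hoverlap⟩ := exists_two_mul_card_filter_mul_mem_le A hball hr
  have hsplit := card_filter_add_card_filter_not (s := A) (fun a => a * g ∈ A)
  have hdisplaced := card_filter_mul_notMem_le_of_mem_pow A hg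
  linarith

end CayleyGraph

open CayleyGraph in
theorem coulhon_saloff_coste_general {G : Type*} [Group G] (S : Set G)
    (hfin : S.Finite)
    (ρ : ℕ → ℕ) (hρ : ∀ n : ℕ, ρ n = sInf {r : ℕ | n ≤ ((S ∪ {1} : Set G) ^ r).ncard})
    (A : Set G) (hA : A.Finite) :
    (A.ncard : ℝ) / (2 * ρ (2 * A.ncard)) ≤
      ({p : G × G | p.1 ∈ A ∧ p.2 ∈ S ∧ p.1 * p.2 ∉ A}.ncard : ℝ) := by
  classical
  lift S to Finset G using hfin
  lift A to Finset G using hA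
  obtain hr | hr := (ρ (2 * #A)).eq_zero_or_pos
  · simp [hr]
  have hball : 2 * #A ≤ #(insert 1 S ^ ρ (2 * #A)) := by
    rw [hρ] at hr ⊢
    simpa [← Set.ncard_coe_finset, Set.union_singleton] using
      Nat.sInf_mem (Nat.nonempty_of_pos_sInf hr)
  have hboundary :
      {p : G × G | p.1 ∈ (A : Set G) ∧ p.2 ∈ (S : Set G) ∧ p.1 * p.2 ∉ (A : Set G)} =
        edgeBoundary S A := by
    ext; simp [edgeBoundary, and_assoc]
  rw [Set.ncard_coe_finset, hboundary, Set.ncard_coe_finset, div_le_iff₀ (by positivity)]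
  exact_mod_cast (card_le_two_mul_mul_card_edgeBoundary A hball).trans_eq (by ring)

/-- **Coulhon–Saloff-Coste isoperimetric inequality.** Let `G` be an infinite group
generated by a finite symmetric set `S`, with balls `B r = (S ∪ {1}) ^ r` and inverse
growth function `ρ n = min {r : |B r| ≥ n}`. Then for every nonempty finite `A ⊆ G`,
the edge boundary `∂A = {(a,s) ∈ A × S : a * s ∉ A}` satisfies
`|∂A| ≥ |A| / (2 ρ(2|A|))`. -/
theorem coulhon_saloff_coste {G : Type*} [Group G] [Infinite G] (S : Set G)
    (hfin : S.Finite) (hsym : S⁻¹ = S) (hgen : Subgroup.closure S = ⊤)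
    (ρ : ℕ → ℕ) (hρ : ∀ n : ℕ, ρ n = sInf {r : ℕ | n ≤ ((S ∪ {1} : Set G) ^ r).ncard})
    (A : Set G) (hA : A.Finite) (hAne : A.Nonempty) :
    (A.ncard : ℝ) / (2 * ρ (2 * A.ncard)) ≤
      ({p : G × G | p.1 ∈ A ∧ p.2 ∈ S ∧ p.1 * p.2 ∉ A}.ncard : ℝ) :=
  coulhon_saloff_coste_general S hfin ρ hρ A hA
end

section
/- Let G be an infinite group generated by a finite symmetric set S, with balls B_r = (S ∪ {1})^r, and suppose there exist constants c > 0 and d > 2 such that |B_r| ≥ c·r^d for all r ≥ 1. Then there exists a constant c' > 0 such that for every nonempty finite subset A ⊆ G, |∂A| ≥ c' · |A|^{(d-1)/d}, where ∂A = { (a,s) ∈ A × S : a·s ∉ A }. (That is, super-d-dimensional volume growth implies a d-dimensional isoperimetric inequality.) -/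
/-!
If `B = (S ∪ {1}) ^ r` has at least twice as many elements as `A`, then averaging over `g ∈ B`
shows that some right translate `A * g` leaves at least half of `A` outside `A`. On the other
hand, writing `g` as a product of `r` elements of `S ∪ {1}`, each point of `A` pushed out of `A`
by `g` is charged to a boundary edge crossed along the way, and each boundary edge is charged at
most `r` times. Hence `|A| ≤ 2 r |∂A|`, and the growth hypothesis lets one choose
`r ≈ |A| ^ (1/d)`.
-/

open Pointwise Finset

section EdgeBoundary

variable {G : Type*} [Group G] [DecidableEq G]

def edgeBoundary (A S : Finset G) : Finset (G × G) :=
  (A ×ˢ S).filter fun p => p.1 * p.2 ∉ A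

def exitSet (A : Finset G) (g : G) : Finset G :=
  A.filter fun a => a * g ∉ A

@[simp]
theorem exitSet_one (A : Finset G) : exitSet A 1 = ∅ := by
  simp [exitSet]

theorem card_exitSet_mul_le (A : Finset G) (g h : G) :
    #(exitSet A (g * h)) ≤ #(exitSet A g) + #(exitSet A h) := by
  calc #(exitSet A (g * h)) ≤ #(exitSet A g ∪ (exitSet A h).image (· * g⁻¹)) := by
        refine card_le_card fun a ha => ?_
        simp only [exitSet, mem_filter, mem_union, mem_image] at ha ⊢
        by_cases hag : a * g ∈ A
        · exact Or.inr ⟨a * g, ⟨hag, by rw [mul_assoc]; exact ha.2⟩, by group⟩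
        · exact Or.inl ⟨ha.1, hag⟩
    _ ≤ #(exitSet A g) + #(exitSet A h) :=
        (card_union_le _ _).trans (Nat.add_le_add_left card_image_le _)

theorem card_exitSet_le_card_edgeBoundary {A S : Finset G} {s : G} (hs : s ∈ S) :
    #(exitSet A s) ≤ #(edgeBoundary A S) :=
  card_le_card_of_injOn (fun a => (a, s))
    (fun a ha => by simp_all [exitSet, edgeBoundary])
    (fun _ _ _ _ h => congrArg Prod.fst h)

theorem card_exitSet_le_of_mem_pow {A S : Finset G} {r : ℕ} {g : G}
    (hg : g ∈ (S ∪ {1}) ^ r) : #(exitSet A g) ≤ r * #(edgeBoundary A S) := by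
  induction r generalizing g with
  | zero => simp_all
  | succ r ih =>
    rw [pow_succ] at hg
    obtain ⟨h, hh, s, hs, rfl⟩ := mem_mul.1 hg
    have hs_le : #(exitSet A s) ≤ #(edgeBoundary A S) := by
      rcases mem_union.1 hs with hs | hs
      · exact card_exitSet_le_card_edgeBoundary hs
      · simp [mem_singleton.1 hs]
    calc #(exitSet A (h * s)) ≤ #(exitSet A h) + #(exitSet A s) := card_exitSet_mul_le A h s
      _ ≤ r * #(edgeBoundary A S) + #(edgeBoundary A S) := Nat.add_le_add (ih hh) hs_le
      _ = (r + 1) * #(edgeBoundary A S) := by ring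

theorem sum_card_filter_mul_mem_le (A B : Finset G) :
    ∑ g ∈ B, #(A.filter fun a => a * g ∈ A) ≤ #A * #A := by
  calc ∑ g ∈ B, #(A.filter fun a => a * g ∈ A)
      = ∑ a ∈ A, #(B.filter fun g => a * g ∈ A) := by
        simp only [card_filter]; exact sum_comm
    _ ≤ ∑ _a ∈ A, #A := sum_le_sum fun a _ =>
        card_le_card_of_injOn (a * ·) (fun _ hg => (mem_filter.1 hg).2)
          (mul_right_injective a).injOn
    _ = #A * #A := by rw [sum_const, smul_eq_mul]

theorem exists_card_le_two_mul_card_exitSet {A B : Finset G} (hA : A.Nonempty)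
    (hB : 2 * #A ≤ #B) : ∃ g ∈ B, #A ≤ 2 * #(exitSet A g) := by
  have hA_pos : 0 < #A := card_pos.2 hA
  obtain ⟨g, hgB, hg_min⟩ := exists_min_image B (fun g => #(A.filter fun a => a * g ∈ A))
    (card_pos.1 (by omega))
  refine ⟨g, hgB, ?_⟩
  have h_avg : #B * #(A.filter fun a => a * g ∈ A) ≤ #A * #A :=
    (card_nsmul_le_sum B _ _ hg_min).trans (sum_card_filter_mul_mem_le A B)
  have h_stay : 2 * #(A.filter fun a => a * g ∈ A) ≤ #A :=
    Nat.le_of_mul_le_mul_left (by nlinarith) hA_pos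
  have h_split := card_filter_add_card_filter_not (s := A) (fun a => a * g ∈ A)
  rw [exitSet]
  omega

theorem card_le_two_mul_mul_card_edgeBoundary {A S : Finset G} (hA : A.Nonempty) {r : ℕ}
    (hball : 2 * #A ≤ #((S ∪ {1}) ^ r)) : #A ≤ 2 * r * #(edgeBoundary A S) := by
  obtain ⟨g, hg, hA_le⟩ := exists_card_le_two_mul_card_exitSet hA hball
  calc #A ≤ 2 * #(exitSet A g) := hA_le
    _ ≤ 2 * (r * #(edgeBoundary A S)) := Nat.mul_le_mul_left 2 (card_exitSet_le_of_mem_pow hg)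
    _ = 2 * r * #(edgeBoundary A S) := (mul_assoc _ _ _).symm

end EdgeBoundary

theorem exists_nat_mul_le_rpow_and_le {K d n : ℝ} (hK : 0 < K) (hd : 0 < d) (hn : 1 ≤ n) :
    ∃ r : ℕ, 1 ≤ r ∧ K * n ≤ (r : ℝ) ^ d ∧ (r : ℝ) ≤ (K ^ d⁻¹ + 1) * n ^ d⁻¹ := by
  set x := (K * n) ^ d⁻¹
  have hx : 0 < x := by positivity
  have hn_root : 1 ≤ n ^ d⁻¹ := Real.one_le_rpow hn (by positivity)
  refine ⟨⌈x⌉₊, Nat.one_le_iff_ne_zero.2 (by simpa using hx), ?_, ?_⟩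
  · calc K * n = x ^ d := (Real.rpow_inv_rpow (by positivity) hd.ne').symm
      _ ≤ (⌈x⌉₊ : ℝ) ^ d := Real.rpow_le_rpow hx.le (Nat.le_ceil x) hd.le
  · calc (⌈x⌉₊ : ℝ) ≤ x + 1 := (Nat.ceil_lt_add_one hx.le).le
      _ = K ^ d⁻¹ * n ^ d⁻¹ + 1 := by rw [← Real.mul_rpow hK.le (by linarith)]
      _ ≤ (K ^ d⁻¹ + 1) * n ^ d⁻¹ := by nlinarith

theorem isoperimetry_of_growth_general {G : Type*} [Group G] (S : Set G)
    (hfin : S.Finite)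
    (c d : ℝ) (hc : 0 < c) (hd : 2 < d)
    (hgrowth : ∀ r : ℕ, 1 ≤ r → c * (r : ℝ) ^ d ≤ ((S ∪ {1} : Set G) ^ r).ncard) :
    ∃ c' : ℝ, 0 < c' ∧ ∀ A : Set G, A.Finite → A.Nonempty →
      c' * (A.ncard : ℝ) ^ ((d - 1) / d) ≤
        ({p : G × G | p.1 ∈ A ∧ p.2 ∈ S ∧ p.1 * p.2 ∉ A}.ncard : ℝ) := by
  classical
  refine ⟨(2 * ((2 / c) ^ d⁻¹ + 1))⁻¹, by positivity, fun A hA hA_ne => ?_⟩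
  lift S to Finset G using hfin
  lift A to Finset G using hA
  rw [coe_nonempty] at hA_ne
  have h_boundary : {p : G × G | p.1 ∈ (A : Set G) ∧ p.2 ∈ (S : Set G) ∧ p.1 * p.2 ∉ (A : Set G)}
      = ↑(edgeBoundary A S) := by
    ext; simp [edgeBoundary, and_assoc]
  rw [h_boundary, Set.ncard_coe_finset, Set.ncard_coe_finset]
  have hn : (1 : ℝ) ≤ #A := by exact_mod_cast card_pos.2 hA_ne
  obtain ⟨r, hr, hr_vol, hr_le⟩ :=
    exists_nat_mul_le_rpow_and_le (d := d) (div_pos two_pos hc) (by linarith) hn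
  have hball : 2 * #A ≤ #((S ∪ {1}) ^ r) := by
    have h_growth := hgrowth r hr
    rw [← coe_singleton, ← coe_union, ← coe_pow, Set.ncard_coe_finset] at h_growth
    have h_ball_real : (2 : ℝ) * #A ≤ #((S ∪ {1}) ^ r) :=
      calc (2 : ℝ) * #A = c * (2 / c * #A) := by field_simp
        _ ≤ _ := (mul_le_mul_of_nonneg_left hr_vol hc.le).trans h_growth
    exact_mod_cast h_ball_real
  have h_iso : (#A : ℝ) ≤ 2 * r * #(edgeBoundary A S) := by
    exact_mod_cast card_le_two_mul_mul_card_edgeBoundary hA_ne hball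
  have h_exp : (d - 1) / d = 1 - d⁻¹ := by field_simp
  rw [h_exp, Real.rpow_sub (by linarith), Real.rpow_one, inv_mul_le_iff₀ (by positivity),
    div_le_iff₀ (by positivity)]
  calc (#A : ℝ) ≤ 2 * r * #(edgeBoundary A S) := h_iso
    _ ≤ 2 * (((2 / c) ^ d⁻¹ + 1) * (#A : ℝ) ^ d⁻¹) * #(edgeBoundary A S) := by gcongr
    _ = 2 * ((2 / c) ^ d⁻¹ + 1) * #(edgeBoundary A S) * (#A : ℝ) ^ d⁻¹ := by ring

/-- Super-`d`-dimensional volume growth implies a `d`-dimensional isoperimetric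
inequality: if `G` is an infinite group generated by a finite symmetric set `S`, with
balls `B r = (S ∪ {1}) ^ r` satisfying `|B r| ≥ c · r ^ d` for all `r ≥ 1` (where `c > 0`
and `d > 2`), then there is `c' > 0` so that every nonempty finite `A ⊆ G` satisfies
`|∂A| ≥ c' · |A| ^ ((d-1)/d)`, where `∂A = {(a,s) ∈ A × S : a * s ∉ A}`. -/
theorem isoperimetry_of_growth {G : Type*} [Group G] [Infinite G] (S : Set G)
    (hfin : S.Finite) (hsym : S⁻¹ = S) (hgen : Subgroup.closure S = ⊤)
    (c d : ℝ) (hc : 0 < c) (hd : 2 < d)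
    (hgrowth : ∀ r : ℕ, 1 ≤ r → c * (r : ℝ) ^ d ≤ ((S ∪ {1} : Set G) ^ r).ncard) :
    ∃ c' : ℝ, 0 < c' ∧ ∀ A : Set G, A.Finite → A.Nonempty →
      c' * (A.ncard : ℝ) ^ ((d - 1) / d) ≤
        ({p : G × G | p.1 ∈ A ∧ p.2 ∈ S ∧ p.1 * p.2 ∉ A}.ncard : ℝ) :=
  isoperimetry_of_growth_general S hfin c d hc hd hgrowth
end

section
/- Every infinite finitely generated group G has a normal subgroup N such that the quotient G/N is just-infinite; that is, G/N is infinite and every nontrivial normal subgroup of G/N has finite index in G/N. -/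
/-- Every infinite finitely generated group `G` has a normal subgroup `N` such that the
quotient `G ⧸ N` is just-infinite: `G ⧸ N` is infinite and every nontrivial normal
subgroup of `G ⧸ N` has finite index in `G ⧸ N`. -/
theorem exists_just_infinite_quotient {G : Type*} [Group G] [Infinite G] [Group.FG G] :
    ∃ (N : Subgroup G) (_ : N.Normal), Infinite (G ⧸ N) ∧
      ∀ K : Subgroup (G ⧸ N), K.Normal → K ≠ ⊥ → K.FiniteIndex := by
  classical
  set S : Set (Subgroup G) := {N | N.Normal ∧ Infinite (G ⧸ N)} with hSdef
  have hbot : (⊥ : Subgroup G) ∈ S := by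
    refine ⟨inferInstance, ?_⟩
    exact Infinite.of_injective _ (QuotientGroup.quotientBot (G := G)).symm.injective
  have hchain : ∀ c ⊆ S, IsChain (· ≤ ·) c → ∀ y ∈ c, ∃ ub ∈ S, ∀ z ∈ c, z ≤ ub := by
    intro c hcS hc y hyc
    have hne : c.Nonempty := ⟨y, hyc⟩
    have hdir : DirectedOn (· ≤ ·) c := hc.directedOn
    set N : Subgroup G := sSup c with hN
    have hmem : ∀ x : G, x ∈ N ↔ ∃ s ∈ c, x ∈ s := fun x =>
      Subgroup.mem_sSup_of_directedOn hne hdir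
    have hNnormal : N.Normal := by
      constructor
      intro x hx g
      obtain ⟨s, hsc, hxs⟩ := (hmem x).1 hx
      have : g * x * g⁻¹ ∈ s := (hcS hsc).1.conj_mem x hxs g
      exact (hmem _).2 ⟨s, hsc, this⟩
    have hNinf : Infinite (G ⧸ N) := by
      by_contra hfin
      have hfin' : Finite (G ⧸ N) := not_infinite_iff_finite.mp hfin
      have hidx : N.FiniteIndex := N.finiteIndex_of_finite_quotient
      have hfg : Group.FG N := Subgroup.fg_of_index_ne_zero N
      have hfg' : N.FG := (Group.fg_iff_subgroup_fg N).mp hfg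
      obtain ⟨Tset, hTclos, hTfin⟩ := (Subgroup.fg_iff N).mp hfg'
      set T : Finset G := hTfin.toFinset with hTdef
      have hTcoe : (T : Set G) = Tset := hTfin.coe_toFinset
      have hdir' : DirectedOn (fun i j : Subgroup G => (i : Set G) ⊆ (j : Set G)) c := by
        intro a ha b hb
        obtain ⟨ub, hub, hau, hbu⟩ := hdir a ha b hb
        exact ⟨ub, hub, hau, hbu⟩
      have hsub : (T : Set G) ⊆ ⋃ i ∈ c, (i : Set G) := by
        intro x hx
        have hxN : x ∈ N := by
          rw [← hTclos]
          exact Subgroup.subset_closure (hTcoe ▸ hx)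
        obtain ⟨s, hsc, hxs⟩ := (hmem x).1 hxN
        exact Set.mem_biUnion hsc hxs
      obtain ⟨i, hic, hTi⟩ :=
        DirectedOn.exists_mem_subset_of_finset_subset_biUnion hne hdir' hsub
      have hiN : i = N := by
        apply le_antisymm (le_sSup hic)
        rw [← hN, ← hTclos, ← hTcoe]
        exact (Subgroup.closure_le i).mpr hTi
      have := (hcS hic).2
      rw [hiN] at this
      exact absurd hfin' this.not_finite
    refine ⟨N, ⟨hNnormal, hNinf⟩, fun z hz => le_sSup hz⟩
  obtain ⟨M, _, hMS, hMmax⟩ := zorn_le_nonempty₀ S hchain ⊥ hbot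
  obtain ⟨hMnormal, hMinf⟩ := hMS
  refine ⟨M, hMnormal, hMinf, ?_⟩
  intro K hKnormal hKne
  have hfsurj : Function.Surjective (QuotientGroup.mk' M) := QuotientGroup.mk'_surjective M
  have hML : M ≤ K.comap (QuotientGroup.mk' M) := by
    intro x hx
    have hx1 : QuotientGroup.mk' M x = 1 := (QuotientGroup.eq_one_iff x).mpr hx
    show QuotientGroup.mk' M x ∈ K
    rw [hx1]; exact K.one_mem
  have hLM : K.comap (QuotientGroup.mk' M) ≠ M := by
    intro h
    apply hKne
    have hM' : Subgroup.comap (QuotientGroup.mk' M) (⊥ : Subgroup (G ⧸ M)) = M := by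
      rw [MonoidHom.comap_bot, QuotientGroup.ker_mk']
    exact Subgroup.comap_injective hfsurj (h.trans hM'.symm)
  have hLnotS : K.comap (QuotientGroup.mk' M) ∉ S := by
    intro hLS
    exact hLM (le_antisymm (hMmax hLS hML) hML)
  have hLnormal : (K.comap (QuotientGroup.mk' M)).Normal := hKnormal.comap _
  have hLfin : Finite (G ⧸ K.comap (QuotientGroup.mk' M)) := by
    by_contra h
    exact hLnotS ⟨hLnormal, not_finite_iff_infinite.mp h⟩
  have hLidx : (K.comap (QuotientGroup.mk' M)).FiniteIndex :=
    (K.comap (QuotientGroup.mk' M)).finiteIndex_of_finite_quotient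
  have hidx : K.index = (K.comap (QuotientGroup.mk' M)).index :=
    (Subgroup.index_comap_of_surjective K hfsurj).symm
  exact ⟨by rw [hidx]; exact hLidx.index_ne_zero⟩
end

section
/- Let G be a group, let n be an element of the center of G of infinite order, let S ⊆ G be a finite set, and let (u_j)_{j≥0} be a sequence in G with u_0 = 1 and u_j⁻¹ u_{j+1} ∈ S for all j ≥ 0, such that the cosets ⟨n⟩u_j, j ≥ 0, are pairwise distinct. Then the map φ : ℤ × ℕ → G defined by φ(i,j) = n^i u_j is injective, and whenever (i,j) and (i',j') are adjacent in the grid ℤ × ℕ (i.e., |i − i'| + |j − j'| = 1), the element φ(i,j)⁻¹ φ(i',j') lies in S ∪ S⁻¹ ∪ {n, n⁻¹}. In other words, φ is an embedding of the grid graph ℤ × ℕ into the Cayley graph of G with respect to the generating set S ∪ S⁻¹ ∪ {n, n⁻¹}. -/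
/-- Grid embedding: let `n` be a central element of infinite order in `G`, `S ⊆ G` a
finite set, and `(u j)` a path with `u 0 = 1`, steps `(u j)⁻¹ * u (j+1) ∈ S`, whose
cosets `⟨n⟩ u j` are pairwise distinct. Then `φ (i, j) = n ^ i * u j` is injective, and
grid-adjacent points (taxicab distance `1`) are mapped to points `g, g'` with
`g⁻¹ * g' ∈ S ∪ S⁻¹ ∪ {n, n⁻¹}`; i.e. `φ` embeds the grid `ℤ × ℕ` into the Cayley graph
of `G` with respect to `S ∪ S⁻¹ ∪ {n, n⁻¹}`. -/
theorem grid_embedding_of_central {G : Type*} [Group G] (n : G)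
    (hcen : n ∈ Subgroup.center G) (hord : ¬ IsOfFinOrder n)
    (S : Set G) (hS : S.Finite)
    (u : ℕ → G) (hu0 : u 0 = 1) (hstep : ∀ j : ℕ, (u j)⁻¹ * u (j + 1) ∈ S)
    (hcoset : ∀ i j : ℕ, (∃ k : ℤ, u i = n ^ k * u j) → i = j) :
    Function.Injective (fun p : ℤ × ℕ => n ^ p.1 * u p.2) ∧
      ∀ (i i' : ℤ) (j j' : ℕ), (i - i').natAbs + Nat.dist j j' = 1 →
        (n ^ i * u j)⁻¹ * (n ^ i' * u j') ∈ S ∪ S⁻¹ ∪ {n, n⁻¹} := by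
  have hinj : Function.Injective (fun k : ℤ => n ^ k) :=
    injective_zpow_iff_not_isOfFinOrder.mpr hord
  constructor
  · rintro ⟨i, j⟩ ⟨i', j'⟩ h
    simp only at h
    have hjj : j = j' := hcoset j j' ⟨i' - i, by
      have : u j = n ^ (-i) * (n ^ i' * u j') := by
        rw [← h]; group
      rw [this]; group⟩
    subst hjj
    have : n ^ i = n ^ i' := mul_right_cancel h
    exact Prod.ext (hinj this) rfl
  · intro i i' j j' hadj
    rcases Nat.add_eq_one_iff.mp hadj with ⟨h1, h2⟩ | ⟨h1, h2⟩
    · -- i = i', |j - j'| = 1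
      have hii : i = i' := by
        have := Int.natAbs_eq_zero.mp h1
        linarith [sub_eq_zero.mp this]
      subst hii
      have : (n ^ i * u j)⁻¹ * (n ^ i * u j') = (u j)⁻¹ * u j' := by group
      rw [this]
      have hcase : j' = j + 1 ∨ j = j' + 1 := by
        simp only [Nat.dist] at h2; omega
      rcases hcase with h | h
      · left; left
        have := hstep j
        rw [← h] at this
        exact this
      · left; right
        have := hstep j'
        rw [← h] at this
        simpa using this
    · -- |i - i'| = 1, j = j'
      have hjj : j = j' := Nat.eq_of_dist_eq_zero h2
      subst hjj
      have key : (n ^ i * u j)⁻¹ * (n ^ i' * u j) = n ^ (i' - i) := by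
        have hc' : u j * n ^ (i' - i) = n ^ (i' - i) * u j :=
          (Subgroup.mem_center_iff.mp (Subgroup.zpow_mem _ hcen (i' - i)) (u j))
        calc (n ^ i * u j)⁻¹ * (n ^ i' * u j)
            = (u j)⁻¹ * (n ^ (i' - i) * u j) := by rw [zpow_sub]; group
          _ = (u j)⁻¹ * (u j * n ^ (i' - i)) := by rw [hc']
          _ = n ^ (i' - i) := by group
      rw [key]
      rcases Int.natAbs_eq_iff.mp h1 with h | h
      · right; right
        have : i' - i = -1 := by omega
        simp [this]
      · right; left
        have : i' - i = 1 := by omega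
        simp [this]
end

section
/- Let (Ω, F, P) be a probability space, (F_j)_{j≥0} a filtration, and (A_j)_{j≥1} a sequence of events with A_j ∈ F_j for each j. Suppose β ∈ [0,1) is such that for every j ≥ 0 and every event B ∈ F_j, Σ_{i > j} P(A_i ∩ B) ≤ β · P(B). Then for every integer r ≥ 1, P( Σ_{i ≥ 1} 1_{A_i} ≥ r ) ≤ β^r; that is, the probability that at least r of the events A_i occur is at most β^r. -/
open MeasureTheory
open scoped ENNReal

open Classical in
noncomputable def evSet {Ω : Type*} (A : ℕ → Set Ω) (j : ℕ) (ω : Ω) : Finset ℕ :=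
  (Finset.Icc 1 j).filter (fun i => ω ∈ A i)

lemma evSet_mem {Ω : Type*} (A : ℕ → Set Ω) (j : ℕ) (ω : Ω) (i : ℕ) :
    i ∈ evSet A j ω ↔ 1 ≤ i ∧ i ≤ j ∧ ω ∈ A i := by
  classical
  simp [evSet, Finset.mem_filter, Finset.mem_Icc, and_assoc]

lemma evSet_zero {Ω : Type*} (A : ℕ → Set Ω) (ω : Ω) : evSet A 0 ω = ∅ := by
  ext i
  simp only [evSet_mem, Finset.notMem_empty, iff_false]
  omega

lemma evSet_mono {Ω : Type*} (A : ℕ → Set Ω) {j m : ℕ} (h : j ≤ m) (ω : Ω) :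
    evSet A j ω ⊆ evSet A m ω := by
  intro i hi
  rw [evSet_mem] at hi ⊢
  exact ⟨hi.1, hi.2.1.trans h, hi.2.2⟩

open Classical in
lemma evSet_succ_eq {Ω : Type*} (A : ℕ → Set Ω) (j : ℕ) (ω : Ω) :
    evSet A (j+1) ω =
      if ω ∈ A (j+1) then insert (j+1) (evSet A j ω) else evSet A j ω := by
  classical
  by_cases hi : ω ∈ A (j+1)
  · rw [if_pos hi]
    ext i
    rw [Finset.mem_insert, evSet_mem, evSet_mem]
    constructor
    · rintro ⟨h1, h2, h3⟩
      rcases Nat.eq_or_lt_of_le h2 with h | h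
      · exact Or.inl h
      · exact Or.inr ⟨h1, by omega, h3⟩
    · rintro (rfl | ⟨h1, h2, h3⟩)
      · exact ⟨by omega, le_rfl, hi⟩
      · exact ⟨h1, by omega, h3⟩
  · rw [if_neg hi]
    ext i
    rw [evSet_mem, evSet_mem]
    constructor
    · rintro ⟨h1, h2, h3⟩
      refine ⟨h1, ?_, h3⟩
      rcases Nat.eq_or_lt_of_le h2 with h | h
      · exact absurd (h ▸ h3) hi
      · omega
    · rintro ⟨h1, h2, h3⟩
      exact ⟨h1, by omega, h3⟩

open Classical in
lemma evSet_card_succ {Ω : Type*} (A : ℕ → Set Ω) (j : ℕ) (ω : Ω) :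
    (evSet A (j+1) ω).card = (evSet A j ω).card + (if ω ∈ A (j+1) then 1 else 0) := by
  classical
  rw [evSet_succ_eq]
  by_cases hi : ω ∈ A (j+1)
  · have hnm : j + 1 ∉ evSet A j ω := by
      rw [evSet_mem]; omega
    rw [if_pos hi, if_pos hi, Finset.card_insert_of_notMem hnm]
  · rw [if_neg hi, if_neg hi]
    omega

/-- Intermediate value: if at least `r ≥ 1` events occur by time `m`, there is a time
`j ≤ m` at which exactly the `r`-th occurrence happens. -/
lemma evSet_hit {Ω : Type*} (A : ℕ → Set Ω) (ω : Ω) {r m : ℕ} (hr : 1 ≤ r)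
    (hm : r ≤ (evSet A m ω).card) :
    ∃ j, 1 ≤ j ∧ j ≤ m ∧ ω ∈ A j ∧ (evSet A j ω).card = r := by
  classical
  have hex : ∃ j, r ≤ (evSet A j ω).card := ⟨m, hm⟩
  obtain ⟨j, hjs, hjmin⟩ : ∃ j, r ≤ (evSet A j ω).card ∧ ∀ k < j, ¬ r ≤ (evSet A k ω).card :=
    ⟨Nat.find hex, Nat.find_spec hex, fun k hk => Nat.find_min hex hk⟩
  have hjm : j ≤ m := by
    by_contra h
    exact hjmin m (by omega) hm
  have hj0 : j ≠ 0 := by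
    intro h
    rw [h, evSet_zero, Finset.card_empty] at hjs
    omega
  obtain ⟨k, rfl⟩ : ∃ k, j = k + 1 := ⟨j - 1, by omega⟩
  have hprev : ¬ r ≤ (evSet A k ω).card := hjmin k (by omega)
  have hsucc := evSet_card_succ A k ω
  have hAk : ω ∈ A (k+1) := by
    by_contra h
    rw [if_neg h] at hsucc
    omega
  rw [if_pos hAk] at hsucc
  exact ⟨k+1, by omega, hjm, hAk, by omega⟩

/-- Let `(Ω, F, P)` be a probability space with filtration `(F_j)`, and `(A_j)_{j ≥ 1}`
events with `A_j ∈ F_j`. If `β ∈ [0,1)` is such that for every `j` and every `B ∈ F_j`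
one has `Σ_{i > j} P(A_i ∩ B) ≤ β · P(B)`, then for every `r ≥ 1` the probability that at
least `r` of the events `A_i` (`i ≥ 1`) occur is at most `β ^ r`. -/
theorem few_events_occur {Ω : Type*} {m0 : MeasurableSpace Ω} (μ : Measure Ω)
    [IsProbabilityMeasure μ] (ℱ : Filtration ℕ m0) (A : ℕ → Set Ω)
    (hA : ∀ j : ℕ, 1 ≤ j → MeasurableSet[ℱ j] (A j))
    (β : ℝ≥0∞) (hβ : β < 1)
    (hsum : ∀ j : ℕ, ∀ B : Set Ω, MeasurableSet[ℱ j] B →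
      (∑' i : ℕ, if j < i then μ (A i ∩ B) else 0) ≤ β * μ B) :
    ∀ r : ℕ, 1 ≤ r →
      μ {ω | ∃ s : Finset ℕ, r ≤ s.card ∧ ∀ i ∈ s, 1 ≤ i ∧ ω ∈ A i} ≤ β ^ r := by
  classical
  set E : ℕ → Set Ω :=
    fun r => {ω | ∃ s : Finset ℕ, r ≤ s.card ∧ ∀ i ∈ s, 1 ≤ i ∧ ω ∈ A i} with hE
  set C : ℕ → ℕ → Set Ω :=
    fun r j => {ω | 1 ≤ j ∧ ω ∈ A j ∧ (evSet A j ω).card = r} with hC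
  -- measurability of the counting function
  have hcard_meas : ∀ j : ℕ, Measurable[ℱ j] (fun ω => (evSet A j ω).card) := by
    intro j
    induction j with
    | zero =>
      have : (fun ω => (evSet A 0 ω).card) = fun _ => 0 := by
        funext ω; rw [evSet_zero]; simp
      rw [this]; exact measurable_const
    | succ k ih =>
      have : (fun ω => (evSet A (k+1) ω).card) =
          fun ω => (evSet A k ω).card + (if ω ∈ A (k+1) then 1 else 0) := by
        funext ω; exact evSet_card_succ A k ω
      rw [this]
      refine Measurable.add ((ih.mono (ℱ.mono (Nat.le_succ k)) le_rfl)) ?_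
      exact Measurable.ite (hA (k+1) (by omega)) measurable_const measurable_const
  have hCmeas : ∀ r j : ℕ, MeasurableSet[ℱ j] (C r j) := by
    intro r j
    rcases Nat.eq_zero_or_pos j with rfl | hj
    · have : C r 0 = ∅ := by
        ext ω; simp [hC]
      rw [this]; exact @MeasurableSet.empty _ (ℱ 0)
    · have : C r j = A j ∩ {ω | (evSet A j ω).card = r} := by
        ext ω; simp only [hC, Set.mem_setOf_eq, Set.mem_inter_iff]; tauto
      rw [this]
      exact (hA j hj).inter (hcard_meas j (measurableSet_singleton r))
  have hCmeas0 : ∀ r j : ℕ, MeasurableSet (C r j) :=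
    fun r j => ℱ.le j _ (hCmeas r j)
  -- each C r j is contained in E r
  have hCsub : ∀ r j : ℕ, C r j ⊆ E r := by
    rintro r j ω ⟨hj, hAj, hcard⟩
    exact ⟨evSet A j ω, le_of_eq hcard.symm,
      fun i hi => ⟨((evSet_mem A j ω i).mp hi).1, ((evSet_mem A j ω i).mp hi).2.2⟩⟩
  -- disjointness
  have hdisj : ∀ r : ℕ, Pairwise (Function.onFun Disjoint (C r)) := by
    intro r
    have key : ∀ j j' : ℕ, j < j' → ∀ ω, ω ∈ C r j → ω ∈ C r j' → False := by
      rintro j j' hlt ω ⟨hj, hAj, hcard⟩ ⟨hj', hAj', hcard'⟩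
      have h1 : insert j' (evSet A j ω) ⊆ evSet A j' ω := by
        intro i hi
        rcases Finset.mem_insert.mp hi with rfl | hi
        · rw [evSet_mem]; exact ⟨hj', le_rfl, hAj'⟩
        · exact evSet_mono A (le_of_lt hlt) ω hi
      have h2 : j' ∉ evSet A j ω := by rw [evSet_mem]; omega
      have := Finset.card_le_card h1
      rw [Finset.card_insert_of_notMem h2] at this
      omega
    intro j j' hne
    rw [Function.onFun, Set.disjoint_left]
    intro ω h1 h2
    rcases Nat.lt_or_gt_of_ne hne with h | h
    · exact key j j' h ω h1 h2
    · exact key j' j h ω h2 h1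
  -- sum of measures of C r j is at most μ (E r)
  have hsum_le : ∀ r : ℕ, (∑' j : ℕ, μ (C r j)) ≤ μ (E r) := by
    intro r
    rw [← measure_iUnion (hdisj r) (hCmeas0 r)]
    exact measure_mono (Set.iUnion_subset (hCsub r))
  -- inductive step
  have hstep : ∀ r : ℕ, 1 ≤ r → μ (E (r+1)) ≤ β * μ (E r) := by
    intro r hr
    have hsubset : E (r+1) ⊆ ⋃ j : ℕ, ⋃ i : ℕ, (if j < i then A i ∩ C r j else ∅) := by
      rintro ω ⟨s, hcard, hs⟩
      set m := s.sup id with hm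
      have hsm : s ⊆ evSet A m ω := by
        intro i hi
        rw [evSet_mem]
        exact ⟨(hs i hi).1, Finset.le_sup (f := id) hi, (hs i hi).2⟩
      have hmcard : r + 1 ≤ (evSet A m ω).card :=
        hcard.trans (Finset.card_le_card hsm)
      obtain ⟨j, hj1, hjm, hAj, hjcard⟩ := evSet_hit A ω hr (by omega : r ≤ (evSet A m ω).card)
      have hnotsub : ¬ evSet A m ω ⊆ evSet A j ω := by
        intro h
        have := Finset.card_le_card h
        omega
      obtain ⟨i, him, hinot⟩ := Finset.not_subset.mp hnotsub
      rw [evSet_mem] at him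
      have hji : j < i := by
        by_contra h
        exact hinot ((evSet_mem A j ω i).mpr ⟨him.1, by omega, him.2.2⟩)
      refine Set.mem_iUnion.mpr ⟨j, Set.mem_iUnion.mpr ⟨i, ?_⟩⟩
      rw [if_pos hji]
      exact ⟨him.2.2, hj1, hAj, hjcard⟩
    calc μ (E (r+1)) ≤ μ (⋃ j : ℕ, ⋃ i : ℕ, (if j < i then A i ∩ C r j else ∅)) :=
          measure_mono hsubset
      _ ≤ ∑' j : ℕ, μ (⋃ i : ℕ, (if j < i then A i ∩ C r j else ∅)) := measure_iUnion_le _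
      _ ≤ ∑' j : ℕ, ∑' i : ℕ, μ (if j < i then A i ∩ C r j else ∅) :=
          ENNReal.tsum_le_tsum (fun j => measure_iUnion_le _)
      _ = ∑' j : ℕ, ∑' i : ℕ, (if j < i then μ (A i ∩ C r j) else 0) := by
          simp only [apply_ite μ, measure_empty]
      _ ≤ ∑' j : ℕ, β * μ (C r j) :=
          ENNReal.tsum_le_tsum (fun j => hsum j (C r j) (hCmeas r j))
      _ = β * ∑' j : ℕ, μ (C r j) := ENNReal.tsum_mul_left
      _ ≤ β * μ (E r) := mul_le_mul_right (hsum_le r) β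
  -- base case
  have hbase : μ (E 1) ≤ β := by
    have hsubset : E 1 ⊆ ⋃ i : ℕ, (if 0 < i then A i ∩ Set.univ else ∅) := by
      rintro ω ⟨s, hcard, hs⟩
      obtain ⟨i, hi⟩ := Finset.card_pos.mp (Nat.lt_of_lt_of_le Nat.zero_lt_one hcard)
      refine Set.mem_iUnion.mpr ⟨i, ?_⟩
      have h1 : 0 < i := (hs i hi).1
      rw [if_pos h1]
      exact ⟨(hs i hi).2, trivial⟩
    calc μ (E 1) ≤ μ (⋃ i : ℕ, (if 0 < i then A i ∩ Set.univ else ∅)) :=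
          measure_mono hsubset
      _ ≤ ∑' i : ℕ, μ (if 0 < i then A i ∩ Set.univ else ∅) := measure_iUnion_le _
      _ = ∑' i : ℕ, (if 0 < i then μ (A i ∩ Set.univ) else 0) := by
          simp only [apply_ite μ, measure_empty]
      _ ≤ β * μ Set.univ := hsum 0 Set.univ MeasurableSet.univ
      _ = β := by simp
  intro r hr
  induction r, hr using Nat.le_induction with
  | base => rw [pow_one]; exact hbase
  | succ n hn ih =>
    calc μ (E (n+1)) ≤ β * μ (E n) := hstep n hn
      _ ≤ β * β ^ n := mul_le_mul_right ih β
      _ = β ^ (n+1) := (pow_succ' β n).symm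
end
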